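/- Let γ > 0 and let k > 0 be real, λ = k². Let F : ℂ → ℂ be the regular solution for ℓ = 0 and eigenvalue λ (entire, satisfying z²F''(z) + 2zF'(z) + 2γzF(z) + λz²F(z) = 0 for all z ∈ ℂ and F(0) = 1). Let u₊ be a Kodaira solution for parameter k and u₋ a Kodaira solution for parameter −k. Then there exist constants a₊, a₋ ∈ ℂ such that r²(F'(r)u₊(r) − F(r)u₊'(r)) = a₊ and r²(F'(r)u₋(r) − F(r)u₋'(r)) = a₋ for all r > 0, and moreover 2·i·k·F(r) = a₋·u₊(r) − a₊·u₋(r) for all r > 0; that is, F_{0,λ} = (1/2ik)(a(−k)·U_k − a(k)·U_{−k}). -/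

import Mathlib

noncomputable section

open Complex Filter Set

section helpers

lemma glue_limit {g g' : ℝ → ℂ} {L c : ℂ} {R : ℝ}
    (hd : ∀ r ∈ Set.Ici R, HasDerivAt g (g' r) r)
    (hcont : ContinuousOn g' (Set.Ici R))
    (hg : Tendsto g atTop (nhds c)) (hg' : Tendsto g' atTop (nhds L)) : L = 0 := by
  have h1 : Tendsto (fun a : ℝ => g (a + 1) - g a) atTop (nhds 0) := by
    have := (hg.comp (tendsto_atTop_add_const_right atTop 1 tendsto_id)).sub hg
    simpa using this
  have h2 : Tendsto (fun a : ℝ => g (a + 1) - g a) atTop (nhds L) := by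
    rw [Metric.tendsto_atTop]
    intro ε hε
    obtain ⟨N, hN⟩ := (Metric.tendsto_atTop.mp hg') (ε / 2) (by positivity)
    refine ⟨max N R, fun a ha => ?_⟩
    have haR : R ≤ a := le_trans (le_max_right _ _) ha
    have haN : N ≤ a := le_trans (le_max_left _ _) ha
    have hsub : Set.uIcc a (a + 1) ⊆ Set.Ici R := by
      rw [Set.uIcc_of_le (by linarith)]
      exact fun x hx => le_trans haR hx.1
    have hint : IntervalIntegrable g' MeasureTheory.volume a (a + 1) :=
      (hcont.mono hsub).intervalIntegrable
    have hftc : (∫ x in a..(a + 1), g' x) = g (a + 1) - g a :=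
      intervalIntegral.integral_eq_sub_of_hasDerivAt (fun x hx => hd x (hsub hx)) hint
    have hkey : g (a + 1) - g a - L = ∫ x in a..(a + 1), (g' x - L) := by
      rw [intervalIntegral.integral_sub hint intervalIntegrable_const, hftc]
      simp
    rw [dist_eq_norm, hkey]
    have hb : ‖∫ x in a..(a + 1), (g' x - L)‖ ≤ (ε / 2) * |a + 1 - a| := by
      apply intervalIntegral.norm_integral_le_of_norm_le_const
      intro x hx
      rw [Set.uIoc_of_le (by linarith)] at hx
      have hxN : N ≤ x := le_of_lt (lt_of_le_of_lt haN hx.1)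
      have := hN x hxN
      rw [dist_eq_norm] at this
      linarith
    have : |a + 1 - a| = 1 := by norm_num
    rw [this, mul_one] at hb
    linarith
  have := tendsto_nhds_unique h2 h1
  exact this

lemma wronskian_eq {f g f1 g1 f2 g2 : ℝ → ℂ} {γ k : ℝ}
    (hf : ∀ r : ℝ, 0 < r → HasDerivAt f (f1 r) r)
    (hf1 : ∀ r : ℝ, 0 < r → HasDerivAt f1 (f2 r) r)
    (hg : ∀ r : ℝ, 0 < r → HasDerivAt g (g1 r) r)
    (hg1 : ∀ r : ℝ, 0 < r → HasDerivAt g1 (g2 r) r)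
    (hfe : ∀ r : ℝ, 0 < r →
      f2 r = -(2 / (r : ℂ)) * f1 r - (2 * γ / (r : ℂ)) * f r - (k : ℂ) ^ 2 * f r)
    (hge : ∀ r : ℝ, 0 < r →
      g2 r = -(2 / (r : ℂ)) * g1 r - (2 * γ / (r : ℂ)) * g r - (k : ℂ) ^ 2 * g r)
    {r s : ℝ} (hr : 0 < r) (hs : 0 < s) :
    (r : ℂ) ^ 2 * (f1 r * g r - f r * g1 r) = (s : ℂ) ^ 2 * (f1 s * g s - f s * g1 s) := by
  set W : ℝ → ℂ := fun t => (t : ℂ) ^ 2 * (f1 t * g t - f t * g1 t) with hWdef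
  have hW : ∀ t ∈ Set.Ioi (0 : ℝ), HasDerivWithinAt W ((fun _ => (0 : ℂ)) t) (Set.Ioi 0) t := by
    intro t ht
    have ht' : (0 : ℝ) < t := ht
    have htc : (t : ℂ) ≠ 0 := ofReal_ne_zero.mpr ht'.ne'
    have hid : HasDerivAt (fun x : ℝ => (x : ℂ)) 1 t := by
      simpa using (hasDerivAt_id t).ofReal_comp
    have h2 : HasDerivAt (fun x : ℝ => ((x : ℂ)) ^ 2) (2 * (t : ℂ)) t := by
      have h : HasDerivAt (fun x : ℝ => (x : ℂ) * (x : ℂ)) (1 * (t : ℂ) + (t : ℂ) * 1) t :=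
        hid.mul hid
      convert h using 1
      · funext x; ring
      · ring
    have hD : HasDerivAt W (2 * (t : ℂ) * (f1 t * g t - f t * g1 t)
        + (t : ℂ) ^ 2 * ((f2 t * g t + f1 t * g1 t) - (f1 t * g1 t + f t * g2 t))) t :=
      h2.mul (((hf1 t ht').mul (hg t ht')).sub ((hf t ht').mul (hg1 t ht')))
    have hz : (2 * (t : ℂ) * (f1 t * g t - f t * g1 t)
        + (t : ℂ) ^ 2 * ((f2 t * g t + f1 t * g1 t) - (f1 t * g1 t + f t * g2 t))) = 0 := by
      rw [hfe t ht', hge t ht']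
      field_simp
      ring
    rw [hz] at hD
    exact hD.hasDerivWithinAt
  have key := (convex_Ioi (0 : ℝ)).norm_image_sub_le_of_norm_hasDerivWithin_le hW
    (fun x _ => le_of_eq norm_zero) hs hr
  rw [zero_mul] at key
  have := norm_le_zero_iff.mp key
  rw [sub_eq_zero] at this
  exact this

end helpers


/-- `u : (0,∞) → ℂ` is a Kodaira solution for parameter `k`: a smooth solution of the
`ℓ = 0` radial Schrödinger equation `−u'' − (2/r)u' − (2γ/r)u = k²u` on `(0,∞)` with
`u(r)·r·exp(−ikr − i(γ/k)log r) → 1` as `r → ∞`. -/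
def IsKodaira (γ : ℝ) (k : ℂ) (u : ℝ → ℂ) : Prop :=
  ContDiffOn ℝ (⊤ : ℕ∞) u (Set.Ioi 0) ∧
  (∀ r : ℝ, 0 < r →
    -(deriv (deriv u) r) - ((2 / r : ℝ) : ℂ) * deriv u r - ((2 * γ / r : ℝ) : ℂ) * u r
      = k ^ 2 * u r) ∧
  Filter.Tendsto
    (fun r : ℝ => u r * (r : ℂ) *
      Complex.exp (-(Complex.I * k * (r : ℂ)) - Complex.I * ((γ : ℂ) / k) * (Real.log r : ℂ)))
    Filter.atTop (nhds 1)

/-- Derivative facts for a Kodaira solution. -/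
lemma kodaira_derivs {γ : ℝ} {k : ℂ} {u : ℝ → ℂ} (h : IsKodaira γ k u) :
    (∀ r : ℝ, 0 < r → HasDerivAt u (deriv u r) r) ∧
    (∀ r : ℝ, 0 < r → HasDerivAt (deriv u) (deriv (deriv u) r) r) := by
  obtain ⟨hs, -, -⟩ := h
  constructor
  · intro r hr
    exact ((hs.contDiffAt (isOpen_Ioi.mem_nhds hr)).differentiableAt (by simp)).hasDerivAt
  · intro r hr
    have hd : ContDiffOn ℝ (⊤ : ℕ∞) (deriv u) (Set.Ioi 0) :=
      hs.deriv_of_isOpen isOpen_Ioi (by simp)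
    exact ((hd.contDiffAt (isOpen_Ioi.mem_nhds hr)).differentiableAt (by simp)).hasDerivAt

/-- For real `k > 0`, `λ = k²`: the modified Wronskians of the regular solution `F_{0,λ}`
against Kodaira solutions `U_{±k}` are constants `a(±k)`, and
`F_{0,λ} = (1/2ik)(a(−k)·U_k − a(k)·U_{−k})`. -/
theorem regular_solution_from_kodaira_solutions (γ : ℝ) (hγ : 0 < γ) (k : ℝ) (hk : 0 < k)
    (F : ℂ → ℂ) (hF : Differentiable ℂ F)
    (hFeq : ∀ z : ℂ, z ^ 2 * deriv (deriv F) z + 2 * z * deriv F z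
        + 2 * (γ : ℂ) * z * F z + ((k : ℂ) ^ 2) * z ^ 2 * F z = 0)
    (hF0 : F 0 = 1)
    (up um : ℝ → ℂ)
    (hup : IsKodaira γ (k : ℂ) up) (hum : IsKodaira γ (-(k : ℂ)) um) :
    ∃ ap am : ℂ,
      (∀ r : ℝ, 0 < r →
        (r : ℂ) ^ 2 * (deriv (fun t : ℝ => F (t : ℂ)) r * up r - F (r : ℂ) * deriv up r)
          = ap) ∧
      (∀ r : ℝ, 0 < r →
        (r : ℂ) ^ 2 * (deriv (fun t : ℝ => F (t : ℂ)) r * um r - F (r : ℂ) * deriv um r)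
          = am) ∧
      (∀ r : ℝ, 0 < r →
        2 * Complex.I * (k : ℂ) * F (r : ℂ) = am * up r - ap * um r) := by
  have hknz : (k : ℂ) ≠ 0 := ofReal_ne_zero.mpr hk.ne'
  obtain ⟨hup1, hup2⟩ := kodaira_derivs hup
  obtain ⟨hum1, hum2⟩ := kodaira_derivs hum
  obtain ⟨hups, hupo, hupl⟩ := hup
  obtain ⟨hums, humo, huml⟩ := hum
  -- F restricted to the reals
  have hFd : Differentiable ℂ (deriv F) :=
    (contDiff_infty_iff_deriv.mp (hF.contDiff)).2.differentiable (by simp)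
  have hf : ∀ r : ℝ, 0 < r →
      HasDerivAt (fun t : ℝ => F (t : ℂ)) ((fun t : ℝ => deriv F (t : ℂ)) r) r :=
    fun r _ => (hF.differentiableAt.hasDerivAt).comp_ofReal
  have hf1 : ∀ r : ℝ, 0 < r →
      HasDerivAt (fun t : ℝ => deriv F (t : ℂ)) ((fun t : ℝ => deriv (deriv F) (t : ℂ)) r) r :=
    fun r _ => (hFd.differentiableAt.hasDerivAt).comp_ofReal
  have hderivF : ∀ r : ℝ, deriv (fun t : ℝ => F (t : ℂ)) r = deriv F (r : ℂ) :=
    fun r => (hF.differentiableAt.hasDerivAt.comp_ofReal (z := r)).deriv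
  -- ODEs in normalized form
  have hfe : ∀ r : ℝ, 0 < r →
      (fun t : ℝ => deriv (deriv F) (t : ℂ)) r
        = -(2 / (r : ℂ)) * (fun t : ℝ => deriv F (t : ℂ)) r
          - (2 * γ / (r : ℂ)) * (fun t : ℝ => F (t : ℂ)) r
          - (k : ℂ) ^ 2 * (fun t : ℝ => F (t : ℂ)) r := by
    intro r hr
    have hrz : (r : ℂ) ≠ 0 := ofReal_ne_zero.mpr hr.ne'
    have h := hFeq (r : ℂ)
    simp only
    field_simp
    apply mul_left_cancel₀ hrz
    linear_combination h
  have hupe : ∀ r : ℝ, 0 < r →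
      deriv (deriv up) r = -(2 / (r : ℂ)) * deriv up r - (2 * γ / (r : ℂ)) * up r
        - (k : ℂ) ^ 2 * up r := by
    intro r hr
    have h := hupo r hr
    have hrz : (r : ℂ) ≠ 0 := ofReal_ne_zero.mpr hr.ne'
    push_cast at h
    linear_combination -h
  have hume : ∀ r : ℝ, 0 < r →
      deriv (deriv um) r = -(2 / (r : ℂ)) * deriv um r - (2 * γ / (r : ℂ)) * um r
        - (k : ℂ) ^ 2 * um r := by
    intro r hr
    have h := humo r hr
    have hrz : (r : ℂ) ≠ 0 := ofReal_ne_zero.mpr hr.ne'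
    push_cast at h
    linear_combination -h
  -- Wronskian constants
  set ap : ℂ := deriv F 1 * up 1 - F 1 * deriv up 1 with hapdef
  set am : ℂ := deriv F 1 * um 1 - F 1 * deriv um 1 with hamdef
  set c : ℂ := deriv up 1 * um 1 - up 1 * deriv um 1 with hcdef
  have hap : ∀ r : ℝ, 0 < r →
      (r : ℂ) ^ 2 * (deriv F (r : ℂ) * up r - F (r : ℂ) * deriv up r) = ap := by
    intro r hr
    have := wronskian_eq hf hf1 hup1 hup2 hfe hupe hr one_pos
    rw [hapdef]
    simpa using this
  have ham : ∀ r : ℝ, 0 < r →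
      (r : ℂ) ^ 2 * (deriv F (r : ℂ) * um r - F (r : ℂ) * deriv um r) = am := by
    intro r hr
    have := wronskian_eq hf hf1 hum1 hum2 hfe hume hr one_pos
    rw [hamdef]
    simpa using this
  have hcW : ∀ r : ℝ, 0 < r →
      (r : ℂ) ^ 2 * (deriv up r * um r - up r * deriv um r) = c := by
    intro r hr
    have := wronskian_eq hup1 hup2 hum1 hum2 hupe hume hr one_pos
    rw [hcdef]
    simpa using this
  -- the key limit computation: c = 2 i k
  have hckey : c = 2 * Complex.I * (k : ℂ) := by
    have hknz : (k : ℂ) ≠ 0 := ofReal_ne_zero.mpr hk.ne'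
    set Ep : ℝ → ℂ := fun r => Complex.exp (-(Complex.I * (k : ℂ) * (r : ℂ))
        - Complex.I * ((γ : ℂ) / (k : ℂ)) * (Real.log r : ℂ)) with hEp
    set Em : ℝ → ℂ := fun r => Complex.exp (-(Complex.I * (-(k : ℂ)) * (r : ℂ))
        - Complex.I * ((γ : ℂ) / (-(k : ℂ))) * (Real.log r : ℂ)) with hEm
    set P : ℝ → ℂ := fun r => up r * (r : ℂ) * Ep r with hPdef
    set M : ℝ → ℂ := fun r => um r * (r : ℂ) * Em r with hMdef
    have hP : Filter.Tendsto P Filter.atTop (nhds 1) := hupl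
    have hM : Filter.Tendsto M Filter.atTop (nhds 1) := huml
    have hEE : ∀ r : ℝ, Ep r * Em r = 1 := by
      intro r
      rw [hEp, hEm]
      simp only
      rw [← Complex.exp_add, show (-(Complex.I * (k : ℂ) * (r : ℂ))
        - Complex.I * ((γ : ℂ) / (k : ℂ)) * (Real.log r : ℂ))
        + (-(Complex.I * (-(k : ℂ)) * (r : ℂ))
        - Complex.I * ((γ : ℂ) / (-(k : ℂ))) * (Real.log r : ℂ)) = 0 by
          rw [div_neg]; ring]
      exact Complex.exp_zero
    obtain ⟨R, hR⟩ := Filter.eventually_atTop.mp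
      ((hP.eventually_ne one_ne_zero).and (eventually_ge_atTop (1 : ℝ)))
    have hsub : Set.Ici R ⊆ Set.Ioi (0 : ℝ) :=
      fun x hx => lt_of_lt_of_le zero_lt_one (hR x hx).2
    -- derivative of Ep and Em
    have hEpd : ∀ r : ℝ, 0 < r → HasDerivAt Ep
        (Ep r * (-(Complex.I * (k : ℂ)) - Complex.I * ((γ : ℂ) / (k : ℂ)) * ((r : ℂ))⁻¹)) r := by
      intro r hr
      have hid : HasDerivAt (fun x : ℝ => (x : ℂ)) 1 r := by
        simpa using (hasDerivAt_id r).ofReal_comp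
      have hlog : HasDerivAt (fun x : ℝ => ((Real.log x : ℝ) : ℂ)) ((r⁻¹ : ℝ) : ℂ) r :=
        (Real.hasDerivAt_log hr.ne').ofReal_comp
      have h1 : HasDerivAt (fun x : ℝ => -(Complex.I * (k : ℂ) * (x : ℂ))
          - Complex.I * ((γ : ℂ) / (k : ℂ)) * ((Real.log x : ℝ) : ℂ))
          (-(Complex.I * (k : ℂ)) - Complex.I * ((γ : ℂ) / (k : ℂ)) * ((r : ℂ))⁻¹) r := by
        have ha : HasDerivAt (fun x : ℝ => -(Complex.I * (k : ℂ) * (x : ℂ))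
            - Complex.I * ((γ : ℂ) / (k : ℂ)) * ((Real.log x : ℝ) : ℂ))
            (-(Complex.I * (k : ℂ) * 1) - Complex.I * ((γ : ℂ) / (k : ℂ)) * ((r⁻¹ : ℝ) : ℂ)) r :=
          ((hid.const_mul (Complex.I * (k : ℂ))).neg).sub
          (hlog.const_mul (Complex.I * ((γ : ℂ) / (k : ℂ))))
        convert ha using 1
        push_cast
        ring
      exact h1.cexp
    have hEmd : ∀ r : ℝ, 0 < r → HasDerivAt Em
        (Em r * (Complex.I * (k : ℂ) + Complex.I * ((γ : ℂ) / (k : ℂ)) * ((r : ℂ))⁻¹)) r := by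
      intro r hr
      have hid : HasDerivAt (fun x : ℝ => (x : ℂ)) 1 r := by
        simpa using (hasDerivAt_id r).ofReal_comp
      have hlog : HasDerivAt (fun x : ℝ => ((Real.log x : ℝ) : ℂ)) ((r⁻¹ : ℝ) : ℂ) r :=
        (Real.hasDerivAt_log hr.ne').ofReal_comp
      have h1 : HasDerivAt (fun x : ℝ => -(Complex.I * (-(k : ℂ)) * (x : ℂ))
          - Complex.I * ((γ : ℂ) / (-(k : ℂ))) * ((Real.log x : ℝ) : ℂ))
          (Complex.I * (k : ℂ) + Complex.I * ((γ : ℂ) / (k : ℂ)) * ((r : ℂ))⁻¹) r := by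
        have ha : HasDerivAt (fun x : ℝ => -(Complex.I * (-(k : ℂ)) * (x : ℂ))
            - Complex.I * ((γ : ℂ) / (-(k : ℂ))) * ((Real.log x : ℝ) : ℂ))
            (-(Complex.I * (-(k : ℂ)) * 1)
              - Complex.I * ((γ : ℂ) / (-(k : ℂ))) * ((r⁻¹ : ℝ) : ℂ)) r :=
          ((hid.const_mul (Complex.I * (-(k : ℂ)))).neg).sub
          (hlog.const_mul (Complex.I * ((γ : ℂ) / (-(k : ℂ)))))
        convert ha using 1
        push_cast
        field_simp
        ring
      exact h1.cexp
    -- derivatives of P and M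
    have hPd : ∀ r : ℝ, 0 < r → HasDerivAt P
        (deriv up r * (r : ℂ) * Ep r + up r * Ep r
          + up r * (r : ℂ) * (Ep r * (-(Complex.I * (k : ℂ))
            - Complex.I * ((γ : ℂ) / (k : ℂ)) * ((r : ℂ))⁻¹))) r := by
      intro r hr
      have hid : HasDerivAt (fun x : ℝ => (x : ℂ)) 1 r := by
        simpa using (hasDerivAt_id r).ofReal_comp
      have h : HasDerivAt (fun x : ℝ => up x * (x : ℂ) * Ep x)
          ((deriv up r * (r : ℂ) + up r * 1) * Ep r + up r * (r : ℂ) * (Ep r * (-(Complex.I * (k : ℂ))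
            - Complex.I * ((γ : ℂ) / (k : ℂ)) * ((r : ℂ))⁻¹))) r :=
        ((hup1 r hr).mul hid).mul (hEpd r hr)
      convert h using 1
      ring
    have hMd : ∀ r : ℝ, 0 < r → HasDerivAt M
        (deriv um r * (r : ℂ) * Em r + um r * Em r
          + um r * (r : ℂ) * (Em r * (Complex.I * (k : ℂ)
            + Complex.I * ((γ : ℂ) / (k : ℂ)) * ((r : ℂ))⁻¹))) r := by
      intro r hr
      have hid : HasDerivAt (fun x : ℝ => (x : ℂ)) 1 r := by
        simpa using (hasDerivAt_id r).ofReal_comp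
      have h : HasDerivAt (fun x : ℝ => um x * (x : ℂ) * Em x)
          ((deriv um r * (r : ℂ) + um r * 1) * Em r + um r * (r : ℂ) * (Em r * (Complex.I * (k : ℂ)
            + Complex.I * ((γ : ℂ) / (k : ℂ)) * ((r : ℂ))⁻¹))) r :=
        ((hum1 r hr).mul hid).mul (hEmd r hr)
      convert h using 1
      ring
    -- the quotient and its derivative
    set d : ℝ → ℂ := fun r => (-c + 2 * Complex.I * (k : ℂ) * (P r * M r)
        + (2 * Complex.I * ((γ : ℂ) / (k : ℂ))) * (P r * M r) * ((r : ℂ))⁻¹) / (P r) ^ 2 with hddef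
    have hgd : ∀ r ∈ Set.Ici R, HasDerivAt (fun x => M x / P x) (d r) r := by
      intro r hrR
      have hr : (0 : ℝ) < r := hsub hrR
      have hrz : (r : ℂ) ≠ 0 := ofReal_ne_zero.mpr hr.ne'
      have hPne : P r ≠ 0 := (hR r hrR).1
      have h := (hMd r hr).div (hPd r hr) hPne
      have hPM : P r * M r = up r * um r * (r : ℂ) ^ 2 := by
        have e1 : P r * M r = (up r * um r * (r : ℂ) ^ 2) * (Ep r * Em r) := by
          rw [hPdef, hMdef]; ring
        rw [e1, hEE r, mul_one]
      have hcr := hcW r hr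
      have heq : ((deriv um r * (r : ℂ) * Em r + um r * Em r
          + um r * (r : ℂ) * (Em r * (Complex.I * (k : ℂ)
            + Complex.I * ((γ : ℂ) / (k : ℂ)) * ((r : ℂ))⁻¹))) * P r
          - M r * (deriv up r * (r : ℂ) * Ep r + up r * Ep r
          + up r * (r : ℂ) * (Ep r * (-(Complex.I * (k : ℂ))
            - Complex.I * ((γ : ℂ) / (k : ℂ)) * ((r : ℂ))⁻¹)))) / (P r) ^ 2 = d r := by
        rw [hddef]
        simp only
        congr 1
        rw [← hcr, hPM, hPdef, hMdef]
        simp only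
        linear_combination ((r : ℂ) ^ 2 * (deriv um r * up r - deriv up r * um r)
          + up r * um r * (r : ℂ) ^ 2 * (2 * Complex.I * (k : ℂ)
            + 2 * Complex.I * ((γ : ℂ) / (k : ℂ)) * ((r : ℂ))⁻¹)) * hEE r
      rw [heq] at h
      exact h
    -- continuity of d on Ici R
    have hdc : ContinuousOn d (Set.Ici R) := by
      have hrc : ContinuousOn (fun x : ℝ => (x : ℂ)) (Set.Ici R) :=
        Complex.continuous_ofReal.continuousOn
      have hlogc : ContinuousOn (fun x : ℝ => ((Real.log x : ℝ) : ℂ)) (Set.Ici R) :=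
        Complex.continuous_ofReal.comp_continuousOn
          (Real.continuousOn_log.mono (fun x hx => (hsub hx).ne'))
      have hupc : ContinuousOn up (Set.Ici R) := hups.continuousOn.mono hsub
      have humc : ContinuousOn um (Set.Ici R) := hums.continuousOn.mono hsub
      have hEpc : ContinuousOn Ep (Set.Ici R) := by
        rw [hEp]
        exact Complex.continuous_exp.comp_continuousOn
          (((continuousOn_const.mul hrc).neg).sub (continuousOn_const.mul hlogc))
      have hEmc : ContinuousOn Em (Set.Ici R) := by
        rw [hEm]
        exact Complex.continuous_exp.comp_continuousOn
          (((continuousOn_const.mul hrc).neg).sub (continuousOn_const.mul hlogc))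
      have hPc : ContinuousOn P (Set.Ici R) := (hupc.mul hrc).mul hEpc
      have hMc : ContinuousOn M (Set.Ici R) := (humc.mul hrc).mul hEmc
      have hinvc : ContinuousOn (fun x : ℝ => ((x : ℂ))⁻¹) (Set.Ici R) :=
        hrc.inv₀ (fun x hx => ofReal_ne_zero.mpr (hsub hx).ne')
      rw [hddef]
      exact ((continuousOn_const.add (continuousOn_const.mul (hPc.mul hMc))).add
          ((continuousOn_const.mul (hPc.mul hMc)).mul hinvc)).div (hPc.pow 2)
          (fun x hx => pow_ne_zero 2 (hR x hx).1)
    -- limits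
    have hinv0 : Filter.Tendsto (fun r : ℝ => ((r : ℂ))⁻¹) Filter.atTop (nhds 0) := by
      have h1 := tendsto_inv_atTop_zero (𝕜 := ℝ)
      have h2 := (Complex.continuous_ofReal.tendsto 0).comp h1
      simpa [Function.comp_def, Complex.ofReal_inv] using h2
    have hPM : Filter.Tendsto (fun r => P r * M r) Filter.atTop (nhds 1) := by
      simpa using hP.mul hM
    have hnum : Filter.Tendsto (fun r : ℝ => -c + 2 * Complex.I * (k : ℂ) * (P r * M r)
        + (2 * Complex.I * ((γ : ℂ) / (k : ℂ))) * (P r * M r) * ((r : ℂ))⁻¹)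
        Filter.atTop (nhds (-c + 2 * Complex.I * (k : ℂ))) := by
      have h1 := (tendsto_const_nhds (x := -c)).add
        ((tendsto_const_nhds (x := 2 * Complex.I * (k : ℂ))).mul hPM)
      have h2 := h1.add (((tendsto_const_nhds
        (x := 2 * Complex.I * ((γ : ℂ) / (k : ℂ)))).mul hPM).mul hinv0)
      simpa using h2
    have hdlim : Filter.Tendsto d Filter.atTop (nhds (-c + 2 * Complex.I * (k : ℂ))) := by
      rw [hddef]
      have h := hnum.div (hP.pow 2) (by norm_num : (1 : ℂ) ^ 2 ≠ 0)
      simp at h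
      exact h
    have hglim : Filter.Tendsto (fun r => M r / P r) Filter.atTop (nhds 1) := by
      have h := hM.div hP one_ne_zero
      rw [div_one] at h
      exact h
    have hzero := glue_limit hgd hdc hglim hdlim
    linear_combination -hzero
  refine ⟨ap, am, ?_, ?_, ?_⟩
  · intro r hr
    rw [hderivF r]
    exact hap r hr
  · intro r hr
    rw [hderivF r]
    exact ham r hr
  · intro r hr
    have h1 := hap r hr
    have h2 := ham r hr
    have h3 := hcW r hr
    rw [hckey] at h3
    linear_combination up r * h2 - um r * h1 - F (r : ℂ) * h3
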